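/- arXiv:1309.2512 — 2 statements merged into one kernel-verified Lean document; each statement's English description precedes it below -/
import Mathlib

section
/- If x ∈ A_n \ A_{n-1} (for n ≥ 1), then x ⊆ A_{n-1} and there exists y ∈ x such that x \ {y} ∈ A_{n-1}. -/
open ZFSet Finset

noncomputable section

abbrev HFSet := ZFSet.{0}

/-- The adjunctive hierarchy of hereditarily finite sets. -/
def A : ℕ → Set HFSet
  | 0 => {∅}
  | n + 1 => {∅} ∪ {z | ∃ x ∈ A n, ∃ y ∈ A n, z = insert y x}

/-- Integer-indexed version, with `A n = ∅` for `n < 0`. -/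
def Az (n : ℤ) : Set HFSet := if 0 ≤ n then A n.toNat else ∅

/-- The cumulative hierarchy (von Neumann) of hereditarily finite sets. -/
def W : ℕ → HFSet
  | 0 => ∅
  | n + 1 => ZFSet.powerset (W n)

/-- A ZF set is hereditarily finite if it lies in some finite level of the
cumulative hierarchy. -/
def IsHF (x : HFSet) : Prop := ∃ n, x ∈ W n

/-- The adjunctive rank. -/
def ark (x : HFSet) : ℕ := sInf {n | x ∈ A n}

/-- The (von Neumann) rank of a hereditarily finite set. -/
def rk (x : HFSet) : ℕ := sInf {n | x ∈ W (n + 1)}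

/-- `B n m` = sets in `A n \ A (n-1)` all of whose elements lie in `A m`. -/
def B (n m : ℤ) : Set HFSet :=
  {x | x ∈ Az n ∧ x ∉ Az (n - 1) ∧ ∀ y, y ∈ x → y ∈ Az m}

def b (n m : ℤ) : ℕ := (B n m).ncard

def a (n : ℕ) : ℕ := (A n).ncard

def c (n : ℕ) : ℕ := (Az n \ Az ((n : ℤ) - 1)).ncard


lemma A_mono : ∀ m : ℕ, A m ⊆ A (m+1) := by
  intro m
  induction m with
  | zero => intro x hx; exact Or.inl hx
  | succ k ih =>
    rintro x (h | ⟨a, ha, b, hb, rfl⟩)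
    · exact Or.inl h
    · exact Or.inr ⟨a, ih ha, b, ih hb, rfl⟩

lemma empty_mem_A : ∀ m : ℕ, (∅ : HFSet) ∈ A m := by
  intro m
  cases m with
  | zero => exact rfl
  | succ k => exact Or.inl rfl

lemma mem_of_mem_A : ∀ m : ℕ, ∀ x ∈ A m, ∀ z ∈ x, z ∈ A m := by
  intro m
  induction m with
  | zero =>
    rintro x hx z hz
    simp only [A, Set.mem_singleton_iff] at hx
    subst hx
    exact absurd hz (ZFSet.notMem_empty z)
  | succ k ih =>
    rintro x (h | ⟨a, ha, b, hb, rfl⟩) z hz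
    · rw [Set.mem_singleton_iff] at h; subst h
      exact absurd hz (ZFSet.notMem_empty z)
    · rw [ZFSet.mem_insert_iff] at hz
      rcases hz with rfl | hz
      · exact A_mono k hb
      · exact A_mono k (ih a ha z hz)

lemma diff_mem_A : ∀ m : ℕ, ∀ x ∈ A m, ∀ y : HFSet, x \ {y} ∈ A m := by
  intro m
  induction m with
  | zero =>
    rintro x hx y
    simp only [A, Set.mem_singleton_iff] at hx
    subst hx
    have : (∅ : HFSet) \ {y} = ∅ := by
      ext z
      simp [ZFSet.mem_sdiff, ZFSet.notMem_empty]
    rw [this]; exact rfl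
  | succ k ih =>
    rintro x (h | ⟨a, ha, b, hb, rfl⟩) y
    · rw [Set.mem_singleton_iff] at h; subst h
      have : (∅ : HFSet) \ {y} = ∅ := by
        ext z
        simp [ZFSet.mem_sdiff, ZFSet.notMem_empty]
      rw [this]; exact Or.inl rfl
    · by_cases hby : b = y
      · have : (insert b a : HFSet) \ {y} = a \ {y} := by
          subst hby
          ext z
          simp only [ZFSet.mem_sdiff, ZFSet.mem_insert_iff, ZFSet.mem_singleton]
          tauto
        rw [this]
        exact A_mono k (ih a ha y)
      · have : (insert b a : HFSet) \ {y} = insert b (a \ {y}) := by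
          ext z
          simp only [ZFSet.mem_sdiff, ZFSet.mem_insert_iff, ZFSet.mem_singleton]
          constructor
          · rintro ⟨rfl | hz, hne⟩
            · exact Or.inl rfl
            · exact Or.inr ⟨hz, hne⟩
          · rintro (rfl | ⟨hz, hne⟩)
            · exact ⟨Or.inl rfl, hby⟩
            · exact ⟨Or.inr hz, hne⟩
        rw [this]
        exact Or.inr ⟨a \ {y}, ih a ha y, b, hb, rfl⟩

theorem stmt1 (n : ℕ) (hn : 1 ≤ n) (x : HFSet) (hx : x ∈ A n) (hx' : x ∉ A (n - 1)) :
    (∀ y, y ∈ x → y ∈ A (n - 1)) ∧ ∃ y, y ∈ x ∧ x \ {y} ∈ A (n - 1) := by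
  obtain ⟨m, rfl⟩ : ∃ m, n = m + 1 := ⟨n - 1, (Nat.succ_pred_eq_of_pos hn).symm⟩
  simp only [Nat.add_sub_cancel] at hx' ⊢
  rcases hx with h | ⟨a, ha, b, hb, rfl⟩
  · rw [Set.mem_singleton_iff] at h; subst h
    exact absurd (empty_mem_A m) hx'
  · constructor
    · intro y hy
      rw [ZFSet.mem_insert_iff] at hy
      rcases hy with rfl | hy
      · exact hb
      · exact mem_of_mem_A m a ha y hy
    · refine ⟨b, ZFSet.mem_insert b a, ?_⟩
      have : (insert b a : HFSet) \ {b} = a \ {b} := by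
        ext z
        simp only [ZFSet.mem_sdiff, ZFSet.mem_insert_iff, ZFSet.mem_singleton]
        tauto
      rw [this]
      exact diff_mem_A m a ha b
end
end

section
/- For all hereditarily finite sets x and y, max(ark(x), ark(y)) ≤ ark(x ∪ {y}) ≤ max(ark(x), ark(y)) + 1. -/
open ZFSet Finset

noncomputable section

lemma A_succ_sub (n : ℕ) : A n ⊆ A (n + 1) := by
  induction n with
  | zero =>
    intro z hz
    exact Or.inl hz
  | succ k ih =>
    intro z hz
    rcases hz with hz | ⟨u, hu, v, hv, rfl⟩
    · exact Or.inl hz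
    · exact Or.inr ⟨u, ih hu, v, ih hv, rfl⟩

lemma A_mono_s2 {m n : ℕ} (h : m ≤ n) : A m ⊆ A n := by
  induction n with
  | zero => simpa [Nat.le_zero.mp h]
  | succ k ih =>
    rcases Nat.lt_or_ge m (k + 1) with h' | h'
    · exact fun z hz => A_succ_sub k (ih (Nat.lt_succ_iff.mp h') hz)
    · have : m = k + 1 := le_antisymm h h'
      simp [this]

lemma A_subset_closed : ∀ n : ℕ, ∀ z ∈ A n, ∀ w : HFSet, w ⊆ z → w ∈ A n := by
  intro n
  induction n with
  | zero =>
    intro z hz w hw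
    have hz' : z = ∅ := hz
    subst hz'
    have : w = ∅ := by
      apply ZFSet.ext
      intro t
      simp only [ZFSet.notMem_empty, iff_false]
      intro ht
      exact (ZFSet.notMem_empty t) (hw ht)
    simp [A, this]
  | succ k ih =>
    intro z hz w hw
    rcases hz with hz | ⟨u, hu, v, hv, rfl⟩
    · have hz' : z = ∅ := hz
      subst hz'
      have : w = ∅ := by
        apply ZFSet.ext
        intro t
        simp only [ZFSet.notMem_empty, iff_false]
        intro ht
        exact (ZFSet.notMem_empty t) (hw ht)
      exact Or.inl this
    · set w' : HFSet := ZFSet.sep (fun t => t ≠ v) w with hw'def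
      have hw'sub : w' ⊆ u := by
        intro t ht
        rw [hw'def, ZFSet.mem_sep] at ht
        rcases ht with ⟨htw, htne⟩
        rcases (ZFSet.mem_insert_iff.mp (hw htw)) with h | h
        · exact absurd h htne
        · exact h
      have hw'A : w' ∈ A k := ih u hu w' hw'sub
      by_cases hv' : v ∈ w
      · have : w = insert v w' := by
          apply ZFSet.ext
          intro t
          rw [ZFSet.mem_insert_iff, hw'def, ZFSet.mem_sep]
          constructor
          · intro ht
            by_cases h : t = v
            · exact Or.inl h
            · exact Or.inr ⟨ht, h⟩
          · rintro (rfl | ⟨ht, _⟩)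
            · exact hv'
            · exact ht
        rw [this]
        exact Or.inr ⟨w', hw'A, v, hv, rfl⟩
      · have : w = w' := by
          apply ZFSet.ext
          intro t
          rw [hw'def, ZFSet.mem_sep]
          constructor
          · intro ht
            refine ⟨ht, ?_⟩
            rintro rfl
            exact hv' ht
          · exact fun h => h.1
        rw [this]
        exact A_succ_sub k hw'A

lemma A_mem_closed : ∀ n : ℕ, ∀ z ∈ A (n + 1), ∀ t, t ∈ z → t ∈ A n := by
  intro n
  induction n with
  | zero =>
    intro z hz t ht
    rcases hz with hz | ⟨u, hu, v, hv, rfl⟩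
    · have hz' : z = ∅ := hz
      subst hz'
      exact absurd ht (ZFSet.notMem_empty t)
    · rcases ZFSet.mem_insert_iff.mp ht with rfl | h
      · exact hv
      · have hu' : u = ∅ := hu
        subst hu'
        exact absurd h (ZFSet.notMem_empty t)
  | succ k ih =>
    intro z hz t ht
    rcases hz with hz | ⟨u, hu, v, hv, rfl⟩
    · have hz' : z = ∅ := hz
      subst hz'
      exact absurd ht (ZFSet.notMem_empty t)
    · rcases ZFSet.mem_insert_iff.mp ht with rfl | h
      · exact hv
      · exact A_succ_sub k (ih u hu t h)

lemma exists_A_of_finite (x : HFSet) (hfin : x.toSet.Finite)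
    (h : ∀ y ∈ x, ∃ m, y ∈ A m) : ∃ m, x ∈ A m := by
  classical
  have key : ∀ N : ℕ, ∀ x : HFSet, ∀ hfin : x.toSet.Finite,
      hfin.toFinset.card ≤ N → (∀ y ∈ x, ∃ m, y ∈ A m) → ∃ m, x ∈ A m := by
    intro N
    induction N with
    | zero =>
      intro x hfin hcard _
      have hx : x.toSet = ∅ := by
        have := Finset.card_eq_zero.mp (Nat.le_zero.mp hcard)
        simpa [Set.Finite.toFinset_eq_empty] using this
      have : x = ∅ := by
        apply ZFSet.ext
        intro t
        simp only [ZFSet.notMem_empty, iff_false]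
        intro ht
        have : t ∈ x.toSet := ht
        simp [hx] at this
      exact ⟨0, by simp [A, this]⟩
    | succ N ihN =>
      intro x hfin hcard hel
      by_cases hx : x = ∅
      · exact ⟨0, by simp [A, hx]⟩
      · have hne : x.toSet.Nonempty := by
          rcases ZFSet.eq_empty_or_nonempty x with h | h
          · exact absurd h hx
          · rcases h with ⟨v, hv⟩
            exact ⟨v, hv⟩
        rcases hne with ⟨v, hv⟩
        set x' : HFSet := ZFSet.sep (fun t => t ≠ v) x with hx'def
        have hx'sub : x'.toSet ⊆ x.toSet := by
          intro t ht
          have : t ∈ x' := ht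
          rw [hx'def, ZFSet.mem_sep] at this
          exact this.1
        have hfin' : x'.toSet.Finite := hfin.subset hx'sub
        have hvne : v ∉ x'.toSet := by
          intro hvv
          have : v ∈ x' := hvv
          rw [hx'def, ZFSet.mem_sep] at this
          exact this.2 rfl
        have hcard' : hfin'.toFinset.card ≤ N := by
          have hss : hfin'.toFinset ⊂ hfin.toFinset := by
            rw [Set.Finite.toFinset_ssubset_toFinset]
            exact ⟨hx'sub, fun hsub => hvne (hsub hv)⟩
          have := Finset.card_lt_card hss
          omega
        have hel' : ∀ y ∈ x', ∃ m, y ∈ A m := by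
          intro y hy
          rw [hx'def, ZFSet.mem_sep] at hy
          exact hel y hy.1
        rcases ihN x' hfin' hcard' hel' with ⟨m1, hm1⟩
        rcases hel v hv with ⟨m2, hm2⟩
        refine ⟨max m1 m2 + 1, ?_⟩
        have hxeq : x = insert v x' := by
          apply ZFSet.ext
          intro t
          rw [ZFSet.mem_insert_iff, hx'def, ZFSet.mem_sep]
          constructor
          · intro ht
            by_cases h : t = v
            · exact Or.inl h
            · exact Or.inr ⟨ht, h⟩
          · rintro (rfl | ⟨ht, _⟩)
            · exact hv
            · exact ht
        rw [hxeq]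
        exact Or.inr ⟨x', A_mono_s2 (le_max_left m1 m2) hm1,
          v, A_mono_s2 (le_max_right m1 m2) hm2, rfl⟩
  exact key hfin.toFinset.card x hfin le_rfl h

lemma W_finite : ∀ n : ℕ, (W n).toSet.Finite := by
  intro n
  induction n with
  | zero =>
    have : (W 0).toSet = ∅ := by
      ext t
      simp [W]
      exact ZFSet.notMem_empty t
    simp [this]
  | succ k ih =>
    have hset : (W (k + 1)).toSet ⊆ ZFSet.toSet ⁻¹' {s | s ⊆ (W k).toSet} := by
      intro t ht
      have : t ∈ ZFSet.powerset (W k) := ht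
      rw [ZFSet.mem_powerset] at this
      intro u hu
      exact this hu
    exact (Set.Finite.preimage (Set.injOn_of_injective SetLike.coe_injective)
      ih.finite_subsets).subset hset

lemma exists_A_of_IsHF (x : HFSet) (hx : IsHF x) : ∃ m, x ∈ A m := by
  rcases hx with ⟨n, hn⟩
  induction n generalizing x with
  | zero =>
    have : x = ∅ := by
      exact absurd hn (ZFSet.notMem_empty x)
    exact ⟨0, by simp [A, this]⟩
  | succ k ih =>
    have hsub : x ⊆ W k := ZFSet.mem_powerset.mp hn
    have hfin : x.toSet.Finite := (W_finite k).subset (fun t ht => hsub ht)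
    apply exists_A_of_finite x hfin
    intro y hy
    exact ih y (hsub hy)

theorem stmt2 (x y : HFSet) (hx : IsHF x) (hy : IsHF y) :
    max (ark x) (ark y) ≤ ark (insert y x) ∧
      ark (insert y x) ≤ max (ark x) (ark y) + 1 := by
  obtain ⟨mx, hmx⟩ := exists_A_of_IsHF x hx
  obtain ⟨my, hmy⟩ := exists_A_of_IsHF y hy
  have hxA : x ∈ A (ark x) :=
    Nat.sInf_mem (⟨mx, hmx⟩ : {n | x ∈ A n}.Nonempty)
  have hyA : y ∈ A (ark y) :=
    Nat.sInf_mem (⟨my, hmy⟩ : {n | y ∈ A n}.Nonempty)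
  set M := max (ark x) (ark y) with hM
  have hins : insert y x ∈ A (M + 1) :=
    Or.inr ⟨x, A_mono_s2 (le_max_left _ _) hxA, y, A_mono_s2 (le_max_right _ _) hyA, rfl⟩
  have hupper : ark (insert y x) ≤ M + 1 :=
    Nat.sInf_le (show M + 1 ∈ {n | insert y x ∈ A n} from hins)
  have hNA : insert y x ∈ A (ark (insert y x)) :=
    Nat.sInf_mem (⟨M + 1, hins⟩ : {n | insert y x ∈ A n}.Nonempty)
  set N := ark (insert y x) with hN
  have hNpos : N ≠ 0 := by
    intro h
    rw [h] at hNA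
    have : insert y x = ∅ := hNA
    have hy' : y ∈ insert y x := ZFSet.mem_insert_iff.mpr (Or.inl rfl)
    rw [this] at hy'
    exact (ZFSet.notMem_empty y) hy'
  obtain ⟨k, hk⟩ : ∃ k, N = k + 1 := ⟨N - 1, by omega⟩
  rw [hk] at hNA
  have harkx : ark x ≤ k + 1 := by
    apply Nat.sInf_le
    show x ∈ A (k + 1)
    exact A_subset_closed (k + 1) (insert y x) hNA x
      (fun t ht => ZFSet.mem_insert_iff.mpr (Or.inr ht))
  have harky : ark y ≤ k := by
    apply Nat.sInf_le
    show y ∈ A k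
    exact A_mem_closed k (insert y x) hNA y (ZFSet.mem_insert_iff.mpr (Or.inl rfl))
  rw [hk]
  exact ⟨max_le harkx (le_trans harky (Nat.le_succ k)), by omega⟩
end
end
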